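/- arXiv:1801.03345 — 4 statements merged into one kernel-verified Lean document; each statement's English description precedes it below -/
import Mathlib

section
/- For every 0 < ε ≤ 1/8, the μ-mass of the margin region satisfies μ({x : |η(x) − 1/2| ≤ ε}) ≤ min(1, 10·ε/Δ). -/
open MeasureTheory Real

/-- Standard Gaussian density on `ℝ^d`. -/
noncomputable def stdGaussianDensity (d : ℕ) (x : EuclideanSpace ℝ (Fin d)) : ℝ :=
  (2 * π) ^ (-(d : ℝ) / 2) * Real.exp (-‖x‖ ^ 2 / 2)

/-- Regression function of the Gaussian translation model:
`η(x) = γ_d(x − m) / (γ_d(x) + γ_d(x − m))`. -/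
noncomputable def gaussEta (d : ℕ) (m : EuclideanSpace ℝ (Fin d))
    (x : EuclideanSpace ℝ (Fin d)) : ℝ :=
  stdGaussianDensity d (x - m) / (stdGaussianDensity d x + stdGaussianDensity d (x - m))

/-- Marginal (mixture) law of the design: density `(γ_d(x) + γ_d(x − m))/2`
with respect to Lebesgue measure. -/
noncomputable def gaussMixture (d : ℕ) (m : EuclideanSpace ℝ (Fin d)) :
    Measure (EuclideanSpace ℝ (Fin d)) :=
  volume.withDensity fun x =>
    ENNReal.ofReal ((stdGaussianDensity d x + stdGaussianDensity d (x - m)) / 2)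

/-!
The log-likelihood ratio of the two classes is affine,
`γ_d(x - m) / γ_d(x) = exp (⟪m, x⟫ - ‖m‖² / 2)`, so `η(x) = σ(⟪m, x⟫ - ‖m‖² / 2)` with `σ` the
logistic function. For `ε ≤ 1/8`, `|σ t - 1/2| ≤ ε` forces `|t| ≤ 16ε/3`, so the margin region lies
in a slab orthogonal to `m` of width `32ε / (3‖m‖)`. The mixture is the average of the standard
Gaussian measure (whose density `γ_d` is recognised from its characteristic function) and its
translate by `m`; the projection of either on `m` is a real Gaussian of standard deviation `‖m‖`,
with density at most `1 / (√(2π) ‖m‖)`. Hence the slab has mass at most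
`32ε / (3 √(2π) ‖m‖) ≤ 10ε / ‖m‖`.
-/

open ProbabilityTheory
open scoped RealInnerProductSpace ENNReal NNReal

lemma le_of_sigmoid_le_half_add {t ε : ℝ} (hε₀ : 0 ≤ ε) (hε : ε ≤ 1 / 8)
    (h : sigmoid t ≤ 1 / 2 + ε) : t ≤ 16 / 3 * ε := by
  have he := exp_pos t
  have hsigmoid : sigmoid t = exp t / (1 + exp t) := by
    rw [sigmoid_def, exp_neg]; field_simp; ring
  rw [hsigmoid, div_le_iff₀ (by positivity)] at h
  -- `t ≤ exp t - 1 ≤ 2ε (1 + exp t)`, and `h` caps `exp t` at `5/3`.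
  nlinarith [add_one_le_exp t]

lemma abs_le_of_abs_sigmoid_sub_half_le {t ε : ℝ} (hε : ε ≤ 1 / 8)
    (h : |sigmoid t - 1 / 2| ≤ ε) : |t| ≤ 16 / 3 * ε := by
  have hε₀ : 0 ≤ ε := (abs_nonneg _).trans h
  rw [abs_le] at h ⊢
  refine ⟨?_, le_of_sigmoid_le_half_add hε₀ hε (by linarith)⟩
  have := le_of_sigmoid_le_half_add (t := -t) hε₀ hε (by rw [sigmoid_neg]; linarith)
  linarith

lemma MeasureTheory.MeasurePreserving.map_withDensity_comp {α β : Type*} [MeasurableSpace α]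
    [MeasurableSpace β] {μ : Measure α} {ν : Measure β} {e : α ≃ᵐ β}
    (he : MeasurePreserving e μ ν) (f : β → ℝ≥0∞) :
    (μ.withDensity (f ∘ e)).map e = ν.withDensity f := by
  ext s hs
  rw [Measure.map_apply e.measurable hs, withDensity_apply _ (e.measurable hs),
    withDensity_apply _ hs]
  exact he.setLIntegral_comp_preimage_emb e.measurableEmbedding f s

lemma gaussianPDFReal_le_inv_sqrt (μ : ℝ) (v : ℝ≥0) (x : ℝ) :
    gaussianPDFReal μ v x ≤ (√(2 * π * v))⁻¹ := by
  rw [gaussianPDFReal_def]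
  refine mul_le_of_le_one_right (by positivity) (exp_le_one_iff.mpr ?_)
  exact div_nonpos_of_nonpos_of_nonneg (neg_nonpos.mpr (sq_nonneg _)) (by positivity)

lemma gaussianReal_Icc_le (μ : ℝ) {v : ℝ≥0} (hv : v ≠ 0) (a b : ℝ) :
    gaussianReal μ v (Set.Icc a b) ≤ ENNReal.ofReal ((b - a) / √(2 * π * v)) := by
  calc gaussianReal μ v (Set.Icc a b)
      ≤ ∫⁻ _ in Set.Icc a b, ENNReal.ofReal (√(2 * π * v))⁻¹ := by
        rw [gaussianReal_apply μ hv]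
        exact lintegral_mono fun x => ENNReal.ofReal_le_ofReal (gaussianPDFReal_le_inv_sqrt μ v x)
    _ = ENNReal.ofReal ((b - a) / √(2 * π * v)) := by
        rw [setLIntegral_const, Real.volume_Icc, ← ENNReal.ofReal_mul (by positivity),
          div_eq_mul_inv, mul_comm]

lemma map_inner_stdGaussian {E : Type*} [NormedAddCommGroup E] [InnerProductSpace ℝ E]
    [FiniteDimensional ℝ E] [MeasurableSpace E] [BorelSpace E] (u : E) :
    (stdGaussian E).map (fun x => ⟪u, x⟫) = gaussianReal 0 (‖u‖₊ ^ 2) := by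
  have h := IsGaussian.map_eq_gaussianReal (μ := stdGaussian E) (innerSL ℝ u)
  rw [integral_strongDual_stdGaussian, variance_dual_stdGaussian, innerSL_apply_norm] at h
  simpa [Real.toNNReal_pow (norm_nonneg u)] using h

lemma map_add_const_stdGaussian_inner_mem_Icc_le {E : Type*} [NormedAddCommGroup E]
    [InnerProductSpace ℝ E] [FiniteDimensional ℝ E] [MeasurableSpace E] [BorelSpace E]
    {u : E} (hu : u ≠ 0) (m : E) (a b : ℝ) :
    (stdGaussian E).map (· + m) {x | ⟪u, x⟫ ∈ Set.Icc a b}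
      ≤ ENNReal.ofReal ((b - a) / (√(2 * π) * ‖u‖)) := by
  have hpre : (· + m) ⁻¹' {x | ⟪u, x⟫ ∈ Set.Icc a b}
      = (fun x => ⟪u, x⟫) ⁻¹' Set.Icc (a - ⟪u, m⟫) (b - ⟪u, m⟫) := by
    ext x
    simp only [Set.mem_preimage, Set.mem_ofPred_eq, Set.mem_Icc, inner_add_right]
    constructor <;> rintro ⟨h₁, h₂⟩ <;> constructor <;> linarith
  have hinner : Measurable fun x : E => ⟪u, x⟫ := by fun_prop
  have hslab : MeasurableSet {x : E | ⟪u, x⟫ ∈ Set.Icc a b} := hinner measurableSet_Icc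
  rw [Measure.map_apply (measurable_add_const m) hslab, hpre,
    ← Measure.map_apply hinner measurableSet_Icc, map_inner_stdGaussian]
  refine (gaussianReal_Icc_le _ (by simpa using hu) _ _).trans_eq ?_
  congr 2
  · ring
  · push_cast
    rw [Real.sqrt_mul (by positivity), Real.sqrt_sq (norm_nonneg u)]

section stdGaussianDensity

variable (d : ℕ)

lemma continuous_stdGaussianDensity : Continuous (stdGaussianDensity d) := by
  unfold stdGaussianDensity; fun_prop

lemma stdGaussianDensity_pos (x : EuclideanSpace ℝ (Fin d)) : 0 < stdGaussianDensity d x := by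
  unfold stdGaussianDensity; positivity

lemma integral_stdGaussianDensity : ∫ x, stdGaussianDensity d x = 1 := by
  have h := GaussianFourier.integral_rexp_neg_mul_sq_norm (V := EuclideanSpace ℝ (Fin d))
    (b := 1 / 2) (by norm_num)
  have hexp : ∀ x : EuclideanSpace ℝ (Fin d), exp (-‖x‖ ^ 2 / 2) = exp (-(1 / 2) * ‖x‖ ^ 2) :=
    fun x => by ring_nf
  simp only [stdGaussianDensity, integral_const_mul, hexp]
  rw [h, finrank_euclideanSpace_fin, show π / (1 / 2) = 2 * π by ring,
    ← Real.rpow_add (by positivity), neg_div, neg_add_cancel, Real.rpow_zero]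

open Complex in
lemma integral_stdGaussianDensity_mul_cexp_inner (t : EuclideanSpace ℝ (Fin d)) :
    ∫ x, (stdGaussianDensity d x : ℂ) * cexp (⟪x, t⟫ * I) = cexp (-‖t‖ ^ 2 / 2) := by
  have h := GaussianFourier.integral_cexp_neg_mul_sq_norm_add (V := EuclideanSpace ℝ (Fin d))
    (b := 1 / 2) (by norm_num) I t
  have hexp : ∀ x : EuclideanSpace ℝ (Fin d), (Real.exp (-‖x‖ ^ 2 / 2) : ℂ) * cexp (⟪x, t⟫ * I)
      = cexp (-(1 / 2) * ‖x‖ ^ 2 + I * ⟪t, x⟫) := fun x => by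
    rw [ofReal_exp, ← Complex.exp_add, real_inner_comm]; push_cast; ring_nf
  simp only [stdGaussianDensity, ofReal_mul, mul_assoc, integral_const_mul, hexp]
  rw [h, finrank_euclideanSpace_fin, ← mul_assoc, ofReal_cpow (by positivity),
    show (π : ℂ) / (1 / 2) = ((2 * π : ℝ) : ℂ) by push_cast; ring,
    ← cpow_add _ _ (by simp [Real.pi_ne_zero]),
    show ((-(d : ℝ) / 2 : ℝ) : ℂ) + (d : ℂ) / 2 = 0 by push_cast; ring, cpow_zero, one_mul, I_sq]
  ring_nf

lemma withDensity_stdGaussianDensity :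
    volume.withDensity (fun x => ENNReal.ofReal (stdGaussianDensity d x))
      = stdGaussian (EuclideanSpace ℝ (Fin d)) := by
  have hint : Integrable (stdGaussianDensity d) :=
    .of_integral_ne_zero (by rw [integral_stdGaussianDensity]; exact one_ne_zero)
  have := isFiniteMeasure_withDensity_ofReal hint.2
  refine Measure.ext_of_charFun (funext fun t => ?_)
  rw [charFun_stdGaussian, charFun_apply, integral_withDensity_eq_integral_toReal_smul
    (continuous_stdGaussianDensity d).measurable.ennreal_ofReal
    (.of_forall fun _ => ENNReal.ofReal_lt_top)]
  simp_rw [ENNReal.toReal_ofReal (stdGaussianDensity_pos d _).le, Complex.real_smul]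
  exact integral_stdGaussianDensity_mul_cexp_inner d t

lemma stdGaussianDensity_sub (x m : EuclideanSpace ℝ (Fin d)) :
    stdGaussianDensity d (x - m) = stdGaussianDensity d x * exp (⟪m, x⟫ - ‖m‖ ^ 2 / 2) := by
  rw [stdGaussianDensity, stdGaussianDensity, mul_assoc, ← exp_add, norm_sub_sq_real,
    real_inner_comm]
  ring_nf

end stdGaussianDensity

lemma withDensity_stdGaussianDensity_sub (d : ℕ) (m : EuclideanSpace ℝ (Fin d)) :
    volume.withDensity (fun x => ENNReal.ofReal (stdGaussianDensity d (x - m)))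
      = (stdGaussian (EuclideanSpace ℝ (Fin d))).map (· + m) := by
  rw [← withDensity_stdGaussianDensity,
    ← (measurePreserving_add_right volume m).map_withDensity_comp (e := .addRight m)]
  simp [Function.comp_def]

lemma gaussMixture_eq (d : ℕ) (m : EuclideanSpace ℝ (Fin d)) :
    gaussMixture d m = (2⁻¹ : ℝ≥0∞) • (stdGaussian (EuclideanSpace ℝ (Fin d))
      + (stdGaussian (EuclideanSpace ℝ (Fin d))).map (· + m)) := by
  have hmeas := (continuous_stdGaussianDensity d).measurable.ennreal_ofReal
  have hmeas_sub : Measurable fun x => ENNReal.ofReal (stdGaussianDensity d (x - m)) :=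
    hmeas.comp (measurable_sub_const m)
  have hdensity : (fun x => ENNReal.ofReal ((stdGaussianDensity d x
        + stdGaussianDensity d (x - m)) / 2))
      = (2⁻¹ : ℝ≥0∞) • ((fun x => ENNReal.ofReal (stdGaussianDensity d x))
        + fun x => ENNReal.ofReal (stdGaussianDensity d (x - m))) := by
    ext x
    rw [ENNReal.ofReal_div_of_pos two_pos, ENNReal.ofReal_add (stdGaussianDensity_pos d _).le
      (stdGaussianDensity_pos d _).le, ENNReal.ofReal_ofNat, ENNReal.div_eq_inv_mul]
    rfl
  rw [gaussMixture, hdensity, withDensity_smul _ (hmeas.add hmeas_sub),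
    withDensity_add_left hmeas, withDensity_stdGaussianDensity, withDensity_stdGaussianDensity_sub]

instance isProbabilityMeasure_gaussMixture (d : ℕ) (m : EuclideanSpace ℝ (Fin d)) :
    IsProbabilityMeasure (gaussMixture d m) := by
  rw [gaussMixture_eq]
  constructor
  simp [Measure.map_apply (measurable_add_const m) .univ, ENNReal.inv_two_add_inv_two]

lemma gaussMixture_inner_mem_Icc_le {d : ℕ} (m : EuclideanSpace ℝ (Fin d))
    {u : EuclideanSpace ℝ (Fin d)} (hu : u ≠ 0) (a b : ℝ) :
    gaussMixture d m {x | ⟪u, x⟫ ∈ Set.Icc a b}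
      ≤ ENNReal.ofReal ((b - a) / (√(2 * π) * ‖u‖)) := by
  have hcentred := map_add_const_stdGaussian_inner_mem_Icc_le hu 0 a b
  simp only [add_zero, Measure.map_id'] at hcentred
  rw [gaussMixture_eq, Measure.smul_apply, Measure.add_apply, smul_eq_mul]
  refine (mul_le_mul_right (add_le_add hcentred
    (map_add_const_stdGaussian_inner_mem_Icc_le hu m a b)) _).trans_eq ?_
  rw [← two_mul, ← mul_assoc, ENNReal.inv_mul_cancel two_ne_zero ENNReal.ofNat_ne_top, one_mul]

lemma gaussEta_eq_sigmoid (d : ℕ) (m x : EuclideanSpace ℝ (Fin d)) :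
    gaussEta d m x = sigmoid (⟪m, x⟫ - ‖m‖ ^ 2 / 2) := by
  have hγ := stdGaussianDensity_pos d x
  rw [gaussEta, stdGaussianDensity_sub, sigmoid_def, exp_neg]
  field_simp
  ring

lemma setOf_abs_gaussEta_sub_half_le_subset (d : ℕ) (m : EuclideanSpace ℝ (Fin d)) {ε : ℝ}
    (hε : ε ≤ 1 / 8) :
    {x | |gaussEta d m x - 1 / 2| ≤ ε}
      ⊆ {x | ⟪m, x⟫ ∈ Set.Icc (‖m‖ ^ 2 / 2 - 16 / 3 * ε) (‖m‖ ^ 2 / 2 + 16 / 3 * ε)} := by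
  intro x (hx : |gaussEta d m x - 1 / 2| ≤ ε)
  rw [gaussEta_eq_sigmoid] at hx
  have := abs_le.mp (abs_le_of_abs_sigmoid_sub_half_le hε hx)
  constructor <;> linarith

theorem margin_upper_bound_general (d : ℕ)
    (m : EuclideanSpace ℝ (Fin d)) (hm : m ≠ 0)
    (ε : ℝ) (hε : ε ≤ 1 / 8) :
    gaussMixture d m {x | |gaussEta d m x - 1 / 2| ≤ ε}
      ≤ ENNReal.ofReal (min 1 (10 * ε / ‖m‖)) := by
  rw [ENNReal.ofReal_min, ENNReal.ofReal_one]
  refine le_min prob_le_one ?_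
  rcases lt_or_ge ε 0 with hε₀ | hε₀
  · have hempty : {x | |gaussEta d m x - 1 / 2| ≤ ε} = ∅ :=
      Set.eq_empty_of_forall_notMem fun x hx => ((abs_nonneg _).trans hx).not_gt hε₀
    rw [hempty, measure_empty]
    exact zero_le
  have hΔ : 0 < ‖m‖ := norm_pos_iff.mpr hm
  have hsqrt : 2 ≤ √(2 * π) := Real.le_sqrt_of_sq_le (by nlinarith [Real.pi_gt_three])
  calc gaussMixture d m {x | |gaussEta d m x - 1 / 2| ≤ ε}
      ≤ gaussMixture d m
          {x | ⟪m, x⟫ ∈ Set.Icc (‖m‖ ^ 2 / 2 - 16 / 3 * ε) (‖m‖ ^ 2 / 2 + 16 / 3 * ε)} :=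
        measure_mono (setOf_abs_gaussEta_sub_half_le_subset d m hε)
    _ ≤ ENNReal.ofReal (((‖m‖ ^ 2 / 2 + 16 / 3 * ε) - (‖m‖ ^ 2 / 2 - 16 / 3 * ε))
          / (√(2 * π) * ‖m‖)) := gaussMixture_inner_mem_Icc_le m hm _ _
    _ ≤ ENNReal.ofReal (10 * ε / ‖m‖) := by
        refine ENNReal.ofReal_le_ofReal ?_
        rw [div_le_div_iff₀ (by positivity) hΔ]
        nlinarith [mul_nonneg hε₀ hΔ.le]

/-- Margin upper bound (Proposition 2.1 / Remark A.1, finite-dimensional form):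
for `0 < ε ≤ 1/8`, `μ(|η − 1/2| ≤ ε) ≤ min(1, 10ε/Δ)` with `Δ = ‖m‖`. -/
theorem margin_upper_bound (d : ℕ) (hd : 1 ≤ d)
    (m : EuclideanSpace ℝ (Fin d)) (hm : m ≠ 0)
    (ε : ℝ) (hε0 : 0 < ε) (hε : ε ≤ 1 / 8) :
    gaussMixture d m {x | |gaussEta d m x - 1 / 2| ≤ ε}
      ≤ ENNReal.ofReal (min 1 (10 * ε / ‖m‖)) :=
  margin_upper_bound_general d m hm ε hε
end

section
/- Let ξ be a real random variable with standard Gaussian law N(0,1), let Δ > 0 and 0 < ε ≤ 1/8. Then P(|exp(Δ²/2 + Δ·ξ) − 1| ≤ 4ε) + P(|exp(−Δ²/2 + Δ·ξ) − 1| ≤ 4ε) ≤ 10·ε/Δ. -/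
open MeasureTheory ProbabilityTheory Real Set

lemma gauss_Icc_le (a b : ℝ) :
    gaussianReal 0 1 (Set.Icc a b) ≤ ENNReal.ofReal ((b - a) / Real.sqrt (2 * π)) := by
  rw [gaussianReal_apply 0 one_ne_zero]
  calc ∫⁻ x in Icc a b, gaussianPDF 0 1 x
      ≤ ∫⁻ _ in Icc a b, ENNReal.ofReal ((Real.sqrt (2 * π))⁻¹) := by
        refine lintegral_mono fun x => ?_
        unfold gaussianPDF gaussianPDFReal
        refine ENNReal.ofReal_le_ofReal ?_
        have h1 : √(2 * π * (1:NNReal)) = √(2 * π) := by norm_num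
        rw [h1]
        have hx : rexp (- (x - 0)^2 / (2 * (1:NNReal))) ≤ 1 := by
          rw [Real.exp_le_one_iff]
          have : (0:ℝ) ≤ (x - 0)^2 := sq_nonneg _
          have h2 : (0:ℝ) < 2 * (1:NNReal) := by norm_num
          rw [div_nonpos_iff]; right; constructor <;> linarith
        exact mul_le_of_le_one_right (inv_nonneg.2 (Real.sqrt_nonneg _)) hx
    _ = ENNReal.ofReal ((Real.sqrt (2 * π))⁻¹) * volume (Icc a b) := by
        rw [setLIntegral_const]
    _ ≤ ENNReal.ofReal ((b - a) / Real.sqrt (2 * π)) := by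
        rw [Real.volume_Icc, div_eq_mul_inv,
          ← ENNReal.ofReal_mul (inv_nonneg.2 (Real.sqrt_nonneg _)), mul_comm]

/-- Key Gaussian deviation estimate inside the proof of the margin bound
(Proposition 2.1): for `ξ ∼ N(0,1)`, `Δ > 0` and `0 < ε ≤ 1/8`,
`P(|e^{Δ²/2+Δξ} − 1| ≤ 4ε) + P(|e^{−Δ²/2+Δξ} − 1| ≤ 4ε) ≤ 10ε/Δ`. -/
theorem gaussian_margin_estimate {Ω : Type*} [MeasurableSpace Ω]
    (P : Measure Ω) [IsProbabilityMeasure P] (ξ : Ω → ℝ)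
    (hξ : Measure.map ξ P = gaussianReal 0 1)
    (Δ : ℝ) (hΔ : 0 < Δ) (ε : ℝ) (hε0 : 0 < ε) (hε : ε ≤ 1 / 8) :
    P {ω | |Real.exp (Δ ^ 2 / 2 + Δ * ξ ω) - 1| ≤ 4 * ε} +
        P {ω | |Real.exp (-Δ ^ 2 / 2 + Δ * ξ ω) - 1| ≤ 4 * ε}
      ≤ ENNReal.ofReal (10 * ε / Δ) := by
  have hξm : AEMeasurable ξ P := by
    by_contra h
    rw [Measure.map_of_not_aemeasurable h] at hξ
    have := (measure_univ (μ := gaussianReal 0 1))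
    rw [← hξ] at this
    simp at this
  have h4ε : (0:ℝ) < 1 - 4 * ε := by linarith
  have h4ε' : (0:ℝ) < 1 + 4 * ε := by linarith
  set a := Real.log (1 - 4 * ε) with ha
  set b := Real.log (1 + 4 * ε) with hb
  -- rewrite each event as a preimage of an interval
  have key : ∀ c : ℝ, {ω | |Real.exp (c + Δ * ξ ω) - 1| ≤ 4 * ε}
      = ξ ⁻¹' Icc ((a - c) / Δ) ((b - c) / Δ) := by
    intro c
    ext ω
    simp only [Set.mem_setOf_eq, Set.mem_preimage, Set.mem_Icc, abs_le]
    constructor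
    · rintro ⟨h1, h2⟩
      constructor
      · rw [div_le_iff₀ hΔ, ha]
        have : 1 - 4 * ε ≤ Real.exp (c + Δ * ξ ω) := by linarith
        have := Real.log_le_log h4ε this
        rw [Real.log_exp] at this
        linarith [this]
      · rw [le_div_iff₀ hΔ, hb]
        have : Real.exp (c + Δ * ξ ω) ≤ 1 + 4 * ε := by linarith
        have := Real.log_le_log (Real.exp_pos _) this
        rw [Real.log_exp] at this
        linarith [this]
    · rintro ⟨h1, h2⟩
      rw [div_le_iff₀ hΔ] at h1
      rw [le_div_iff₀ hΔ] at h2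
      have e1 : 1 - 4 * ε ≤ Real.exp (c + Δ * ξ ω) := by
        calc 1 - 4 * ε = Real.exp a := (Real.exp_log h4ε).symm
        _ ≤ _ := Real.exp_le_exp.2 (by nlinarith)
      have e2 : Real.exp (c + Δ * ξ ω) ≤ 1 + 4 * ε := by
        calc Real.exp (c + Δ * ξ ω) ≤ Real.exp b := Real.exp_le_exp.2 (by nlinarith)
        _ = 1 + 4 * ε := Real.exp_log h4ε'
      constructor <;> linarith
  have hmap : ∀ c : ℝ, P {ω | |Real.exp (c + Δ * ξ ω) - 1| ≤ 4 * ε}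
      ≤ ENNReal.ofReal ((b - a) / Δ / Real.sqrt (2 * π)) := by
    intro c
    rw [key c, ← Measure.map_apply_of_aemeasurable hξm measurableSet_Icc, hξ]
    have : (b - c) / Δ - (a - c) / Δ = (b - a) / Δ := by ring
    calc gaussianReal 0 1 (Icc ((a - c) / Δ) ((b - c) / Δ))
        ≤ ENNReal.ofReal (((b - c) / Δ - (a - c) / Δ) / Real.sqrt (2 * π)) :=
          gauss_Icc_le _ _
      _ = _ := by rw [this]
  have hba : b - a ≤ 12 * ε := by
    have hb' : b ≤ 4 * ε := by
      rw [hb]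
      have := Real.log_le_sub_one_of_pos h4ε'
      linarith
    have ha' : -a ≤ 8 * ε := by
      rw [ha, ← Real.log_inv]
      have hpos : (0:ℝ) < (1 - 4 * ε)⁻¹ := by positivity
      have := Real.log_le_sub_one_of_pos hpos
      have h2 : (1 - 4 * ε)⁻¹ - 1 ≤ 8 * ε := by
        rw [sub_le_iff_le_add, inv_le_iff_one_le_mul₀ h4ε]
        nlinarith
      linarith
    linarith
  calc P {ω | |Real.exp (Δ ^ 2 / 2 + Δ * ξ ω) - 1| ≤ 4 * ε} +
        P {ω | |Real.exp (-Δ ^ 2 / 2 + Δ * ξ ω) - 1| ≤ 4 * ε}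
      ≤ ENNReal.ofReal ((b - a) / Δ / Real.sqrt (2 * π)) +
        ENNReal.ofReal ((b - a) / Δ / Real.sqrt (2 * π)) :=
        add_le_add (hmap _) (hmap _)
    _ = ENNReal.ofReal ((b - a) / Δ / Real.sqrt (2 * π) + (b - a) / Δ / Real.sqrt (2 * π)) := by
        have hab : a ≤ b := Real.log_le_log h4ε (by linarith)
        have h0 : (0:ℝ) ≤ (b - a) / Δ / Real.sqrt (2 * π) :=
          div_nonneg (div_nonneg (by linarith) hΔ.le) (Real.sqrt_nonneg _)
        rw [ENNReal.ofReal_add h0 h0]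
    _ ≤ ENNReal.ofReal (10 * ε / Δ) := by
        refine ENNReal.ofReal_le_ofReal ?_
        have hπ : (2.4:ℝ) ≤ Real.sqrt (2 * π) := by
          rw [show (2.4:ℝ) = Real.sqrt (2.4 ^ 2) by
            rw [Real.sqrt_sq]; norm_num]
          apply Real.sqrt_le_sqrt
          nlinarith [Real.pi_gt_three]
        have hs : (0:ℝ) < Real.sqrt (2 * π) := by linarith
        have h1 : (b - a) / Real.sqrt (2 * π) ≤ 5 * ε := by
          rw [div_le_iff₀ hs]; nlinarith
        calc (b - a) / Δ / Real.sqrt (2 * π) + (b - a) / Δ / Real.sqrt (2 * π)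
            = 2 * ((b - a) / Real.sqrt (2 * π)) / Δ := by ring
          _ ≤ 10 * ε / Δ := by gcongr ?_ / Δ; linarith
end

section
/- Let d ≥ 7 be an integer, ε > 0, and Δ ≥ √d · ε. Let Γ ⊆ {−1,1}^(d−1) be any set such that any two distinct elements u ≠ u' of Γ differ in strictly more than (d−1)/4 coordinates. For u ∈ Γ define θ(u) ∈ ℝ^d by θ(u)_1 = Δ and θ(u)_{j+1} = ε·u_j for 1 ≤ j ≤ d−1. Then for all u ≠ u' in Γ, the (undirected) angle ∠(θ(u), θ(u')) = arccos(⟨θ(u), θ(u')⟩/(‖θ(u)‖·‖θ(u')‖)) satisfies √(d−1)·ε/(2Δ) ≤ ∠(θ(u), θ(u')) ≤ π/2. -/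
open InnerProductGeometry Real
open scoped Classical RealInnerProductSpace

/-!
For a sign vector `u ∈ {±1}ⁿ`, `n = d - 1`, the vector `θ(u) = (Δ, ε u)` has squared norm `Δ² + ε² n`, and
`⟪θ(u), θ(u')⟫ = Δ² + ε² (n - 2 H)` where `H` is the Hamming distance of `u` and `u'`. Hence the
cosine of the angle is `1 - 2 H ε² / (Δ² + ε² n)`. It is nonnegative because `H ≤ n ≤ Δ² / ε²`,
and since `H > n / 4` and `n ε² ≤ 3 Δ²` it is at most `1 - c² / 2 ≤ cos c` for `c = √n ε / (2 Δ)`.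
-/

section Angle

variable {V : Type*} [NormedAddCommGroup V] [InnerProductSpace ℝ V]

theorem InnerProductGeometry.angle_le_pi_div_two_of_inner_nonneg {x y : V} (h : 0 ≤ ⟪x, y⟫) :
    angle x y ≤ π / 2 :=
  arccos_le_pi_div_two.2 (div_nonneg h (by positivity))

theorem InnerProductGeometry.le_angle_of_inner_div_le_one_sub_sq_div_two {x y : V} {c : ℝ}
    (h : ⟪x, y⟫ / (‖x‖ * ‖y‖) ≤ 1 - c ^ 2 / 2) : c ≤ angle x y := by
  rcases lt_or_ge c 0 with hc | hc
  · exact hc.le.trans (angle_nonneg x y)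
  -- `⟪x, y⟫ / (‖x‖ * ‖y‖) ≥ -1`, so `h` forces `c ≤ 2`
  have hcπ : c ≤ π := by
    have := (abs_le.1 (abs_real_inner_div_norm_mul_norm_le_one x y)).1
    nlinarith [pi_gt_three]
  calc c = arccos (cos c) := (arccos_cos hc hcπ).symm
    _ ≤ angle x y := arccos_le_arccos (h.trans one_sub_sq_div_two_le_cos)

end Angle

theorem sum_mul_eq_card_sub_two_mul_hammingDist {ι : Type*} [Fintype ι] {u v : ι → ℝ}
    (hu : ∀ i, u i = -1 ∨ u i = 1) (hv : ∀ i, v i = -1 ∨ v i = 1) :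
    ∑ i, u i * v i = Fintype.card ι - 2 * hammingDist u v := by
  calc ∑ i, u i * v i = ∑ i, (1 - 2 * if u i ≠ v i then (1 : ℝ) else 0) := by
        refine Finset.sum_congr rfl fun i _ => ?_
        rcases hu i with h | h <;> rcases hv i with h' | h' <;> norm_num [h, h']
    _ = Fintype.card ι - 2 * hammingDist u v := by
        rw [Finset.sum_sub_distrib, ← Finset.mul_sum, Finset.sum_boole]
        simp [hammingDist]

section PackingVector

variable {n : ℕ} (Δ ε : ℝ)

noncomputable def packingVector (u : Fin n → ℝ) : EuclideanSpace ℝ (Fin (n + 1)) :=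
  WithLp.toLp 2 (Fin.cons Δ (ε • u))

theorem ofLp_packingVector (u : Fin n → ℝ) :
    (packingVector Δ ε u).ofLp = fun i : Fin (n + 1) =>
      if h : (i : ℕ) = 0 then Δ else ε * u ⟨(i : ℕ) - 1, by omega⟩ := by
  funext i
  cases i using Fin.cases <;> simp [packingVector]

theorem inner_packingVector (u v : Fin n → ℝ) :
    ⟪packingVector Δ ε u, packingVector Δ ε v⟫ = Δ ^ 2 + ε ^ 2 * ∑ i, u i * v i := by
  simp only [packingVector, PiLp.inner_apply, RCLike.inner_apply, conj_trivial, Fin.sum_univ_succ,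
    Fin.cons_zero, Fin.cons_succ, Pi.smul_apply, smul_eq_mul, Finset.mul_sum]
  exact congrArg₂ (· + ·) (sq Δ).symm (Finset.sum_congr rfl fun i _ => by ring)

variable {Δ ε}

theorem inner_packingVector_of_sign {u v : Fin n → ℝ} (hu : ∀ i, u i = -1 ∨ u i = 1)
    (hv : ∀ i, v i = -1 ∨ v i = 1) :
    ⟪packingVector Δ ε u, packingVector Δ ε v⟫ = Δ ^ 2 + ε ^ 2 * (n - 2 * hammingDist u v) := by
  rw [inner_packingVector, sum_mul_eq_card_sub_two_mul_hammingDist hu hv, Fintype.card_fin]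

theorem norm_mul_norm_packingVector {u v : Fin n → ℝ} (hu : ∀ i, u i = -1 ∨ u i = 1)
    (hv : ∀ i, v i = -1 ∨ v i = 1) :
    ‖packingVector Δ ε u‖ * ‖packingVector Δ ε v‖ = Δ ^ 2 + ε ^ 2 * n := by
  rw [norm_eq_sqrt_real_inner, norm_eq_sqrt_real_inner, inner_packingVector_of_sign hu hu,
    inner_packingVector_of_sign hv hv, hammingDist_self, hammingDist_self, Nat.cast_zero,
    mul_zero, sub_zero, mul_self_sqrt (by positivity)]

theorem inner_packingVector_nonneg (h : n * ε ^ 2 ≤ Δ ^ 2) {u v : Fin n → ℝ}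
    (hu : ∀ i, u i = -1 ∨ u i = 1) (hv : ∀ i, v i = -1 ∨ v i = 1) :
    0 ≤ ⟪packingVector Δ ε u, packingVector Δ ε v⟫ := by
  have hH : (hammingDist u v : ℝ) ≤ n := by
    exact_mod_cast (hammingDist_le_card_fintype (x := u) (y := v)).trans_eq (Fintype.card_fin n)
  rw [inner_packingVector_of_sign hu hv]
  nlinarith [sq_nonneg ε]

theorem inner_div_norm_mul_norm_packingVector_le (hΔ : 0 < Δ) (h : n * ε ^ 2 ≤ 3 * Δ ^ 2)
    {u v : Fin n → ℝ} (hu : ∀ i, u i = -1 ∨ u i = 1) (hv : ∀ i, v i = -1 ∨ v i = 1)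
    (hsep : (n : ℝ) / 4 ≤ hammingDist u v) :
    ⟪packingVector Δ ε u, packingVector Δ ε v⟫ / (‖packingVector Δ ε u‖ * ‖packingVector Δ ε v‖)
      ≤ 1 - (√n * ε / (2 * Δ)) ^ 2 / 2 := by
  rw [inner_packingVector_of_sign hu hv, norm_mul_norm_packingVector hu hv,
    div_pow, mul_pow, mul_pow, sq_sqrt n.cast_nonneg, div_le_iff₀ (by positivity)]
  have hsq_term : n * ε ^ 2 / (2 ^ 2 * Δ ^ 2) / 2 * (Δ ^ 2 + ε ^ 2 * n) ≤ n * ε ^ 2 / 2 := by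
    rw [div_div, div_mul_eq_mul_div, div_le_iff₀ (by positivity)]
    nlinarith [mul_nonneg (mul_nonneg n.cast_nonneg (sq_nonneg ε)) (sub_nonneg.2 h)]
  nlinarith [mul_le_mul_of_nonneg_right hsep (sq_nonneg ε)]

end PackingVector

/-- Lemma B.3: angle bounds between the packing vectors
`θ(u) = (Δ, ε·u_1, …, ε·u_{d−1})` built from a Varshamov–Gilbert family `Γ`. -/
theorem packing_angle_bounds (d : ℕ) (ε Δ : ℝ) (hε : 0 < ε)
    (hΔ : Real.sqrt d * ε ≤ Δ)
    (Γ : Set (Fin (d - 1) → ℝ))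
    (hΓcoord : ∀ u ∈ Γ, ∀ j, u j = -1 ∨ u j = 1)
    (hΓsep : ∀ u ∈ Γ, ∀ u' ∈ Γ, u ≠ u' →
      ((d : ℝ) - 1) / 4 < ((Finset.univ.filter fun j => u j ≠ u' j).card : ℝ))
    (θ : (Fin (d - 1) → ℝ) → EuclideanSpace ℝ (Fin d))
    (hθ : ∀ u, θ u = fun i : Fin d =>
      if h : (i : ℕ) = 0 then Δ else ε * u ⟨(i : ℕ) - 1, by omega⟩) :
    ∀ u ∈ Γ, ∀ u' ∈ Γ, u ≠ u' →
      Real.sqrt ((d : ℝ) - 1) * ε / (2 * Δ) ≤ angle (θ u) (θ u') ∧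
        angle (θ u) (θ u') ≤ π / 2 := by
  intro u hu u' hu' hne
  obtain ⟨n, rfl⟩ : ∃ n, d = n + 1 :=
    Nat.exists_eq_succ_of_ne_zero (by rintro rfl; exact hne (funext fun j => j.elim0))
  have hθ' : ∀ v, θ v = packingVector Δ ε v := fun v =>
    WithLp.ofLp_injective 2 ((hθ v).trans (ofLp_packingVector Δ ε v).symm)
  have hΔsq : (n + 1) * ε ^ 2 ≤ Δ ^ 2 := by
    have := pow_le_pow_left₀ (by positivity) hΔ 2
    rwa [mul_pow, sq_sqrt (by positivity), Nat.cast_succ] at this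
  have hΔpos : 0 < Δ := lt_of_lt_of_le (by positivity) hΔ
  have hsep : (n : ℝ) / 4 ≤ hammingDist u u' := by
    have := (hΓsep u hu u' hu' hne).le
    rw [Nat.cast_succ, add_sub_cancel_right] at this
    exact this
  rw [hθ', hθ', Nat.cast_succ, add_sub_cancel_right]
  exact ⟨le_angle_of_inner_div_le_one_sub_sq_div_two
      (inner_div_norm_mul_norm_packingVector_le (n := n) hΔpos (by nlinarith [sq_nonneg ε])
        (hΓcoord u hu) (hΓcoord u' hu') hsep),
    angle_le_pi_div_two_of_inner_nonneg
      (inner_packingVector_nonneg (n := n) (by nlinarith) (hΓcoord u hu) (hΓcoord u' hu'))⟩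
end

section
/- (Fano's inequality) Let (E, ℬ) be a measurable space, N ≥ 2 an integer, (A_1, …, A_N) a measurable partition of E, and (ℙ_1, …, ℙ_N) probability measures on (E, ℬ). Then for every probability measure ℚ on (E, ℬ): (1/N)·Σ_{i=1}^N ℙ_i(A_i) ≤ ( (1/N)·Σ_{i=1}^N KL(ℙ_i, ℚ) + log 2 ) / log N, where KL(ℙ, ℚ) = ∫ log(dℙ/dℚ) dℙ if ℙ ≪ ℚ and KL(ℙ, ℚ) = +∞ otherwise. -/
/-!
Donsker–Varadhan: for every test function `f`, `∫ f dℙ - log ∫ exp f dℚ ≤ KL(ℙ, ℚ)`, which is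
Gibbs' inequality for `ℙ` against the exponentially tilted measure `ℚ_f`. The test function
`f = log N · 1_{A_i}` gives `log N · ℙ_i(A_i) ≤ KL(ℙ_i, ℚ) + log (1 + (N - 1) ℚ(A_i))`. Since the
`ℚ(A_i)` add up to `1`, bounding `log` by its tangent line at `2` shows that these last terms add up
to at most `N log 2`; summing over `i` and dividing by `N log N` gives the inequality.
-/

open MeasureTheory
open scoped ENNReal Classical

/-- Kullback–Leibler divergence: `∫ log(dμ/dν) dμ` when `μ ≪ ν` (and the
log-likelihood ratio is integrable), `+∞` otherwise. -/
noncomputable def klDiv {α : Type*} [MeasurableSpace α] (μ ν : Measure α) : ℝ≥0∞ :=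
  if μ ≪ ν ∧ Integrable (llr μ ν) μ then ENNReal.ofReal (∫ x, llr μ ν x ∂μ) else ⊤

open Real

section
variable {α : Type*} [MeasurableSpace α] {μ ν : Measure α}

lemma integral_sub_log_integral_exp_le_integral_llr [IsProbabilityMeasure μ] [SigmaFinite ν]
    (hμν : μ ≪ ν) (h_int : Integrable (llr μ ν) μ) {f : α → ℝ} (hfμ : Integrable f μ)
    (hfν : Integrable (fun x ↦ exp (f x)) ν) :
    ∫ x, f x ∂μ - log (∫ x, exp (f x) ∂ν) ≤ ∫ x, llr μ ν x ∂μ := by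
  have : NeZero ν := ⟨fun hν ↦ IsProbabilityMeasure.ne_zero μ
    (Measure.absolutelyContinuous_zero_iff.1 (hν ▸ hμν))⟩
  have := isProbabilityMeasure_tilted hfν
  have h_nonneg := InformationTheory.integral_llr_add_sub_measure_univ_nonneg
    (hμν.trans (absolutelyContinuous_tilted hfν)) (integrable_llr_tilted_right hμν hfμ h_int hfν)
  rw [integral_llr_tilted_right hμν hfμ hfν h_int] at h_nonneg
  simp only [probReal_univ] at h_nonneg
  linarith

lemma log_mul_measureReal_le_integral_llr_add [IsProbabilityMeasure μ] [IsProbabilityMeasure ν]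
    (hμν : μ ≪ ν) (h_int : Integrable (llr μ ν) μ) {A : Set α} (hA : MeasurableSet A) {c : ℝ}
    (hc : 0 < c) :
    log c * μ.real A ≤ ∫ x, llr μ ν x ∂μ + log (1 + (c - 1) * ν.real A) := by
  have hexp : (fun x ↦ exp (A.indicator (fun _ ↦ log c) x))
      = fun x ↦ A.indicator (fun _ ↦ c - 1) x + 1 := by
    ext x
    by_cases hx : x ∈ A <;> simp [hx, exp_log hc]
  have h_int_exp : Integrable (fun x ↦ A.indicator (fun _ ↦ c - 1) x + 1) ν :=
    ((integrable_const _).indicator hA).add (integrable_const _)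
  have h := integral_sub_log_integral_exp_le_integral_llr hμν h_int
    ((integrable_const (log c)).indicator hA) (hexp ▸ h_int_exp)
  rw [hexp, integral_add ((integrable_const _).indicator hA) (integrable_const _),
    integral_indicator_const _ hA, integral_indicator_const _ hA, integral_const] at h
  simp only [smul_eq_mul, probReal_univ, one_mul] at h
  rw [show ν.real A * (c - 1) + 1 = 1 + (c - 1) * ν.real A by ring] at h
  linarith [mul_comm (log c) (μ.real A)]

lemma ofReal_log_mul_le_klDiv_add [IsProbabilityMeasure μ] [IsProbabilityMeasure ν]
    {A : Set α} (hA : MeasurableSet A) {c : ℝ} (hc : 0 < c) :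
    ENNReal.ofReal (log c) * μ A ≤ klDiv μ ν + ENNReal.ofReal (log (1 + (c - 1) * ν.real A)) := by
  unfold klDiv
  split_ifs with h
  · rw [← ofReal_measureReal, ← ENNReal.ofReal_mul' measureReal_nonneg]
    exact (ENNReal.ofReal_le_ofReal
      (log_mul_measureReal_le_integral_llr_add h.1 h.2 hA hc)).trans ENNReal.ofReal_add_le
  · simp

end

lemma sum_log_one_add_mul_le_card_mul_log_two {ι : Type*} [Fintype ι] {q : ι → ℝ}
    (hq : ∀ i, 0 ≤ q i) (hsum : ∑ i, q i = 1) :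
    ∑ i, log (1 + (Fintype.card ι - 1) * q i) ≤ Fintype.card ι * log 2 := by
  set n : ℝ := (Fintype.card ι : ℝ)
  have hterm (i : ι) : log (1 + (n - 1) * q i) ≤ log 2 + (1 + (n - 1) * q i) / 2 - 1 := by
    have hn : 1 ≤ n := Nat.one_le_cast.2 (Fintype.card_pos_iff.2 ⟨i⟩)
    have hpos : 0 < 1 + (n - 1) * q i := by nlinarith [hq i]
    have := log_le_sub_one_of_pos (half_pos hpos)
    rw [log_div hpos.ne' two_ne_zero] at this
    linarith
  calc ∑ i, log (1 + (n - 1) * q i)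
      ≤ ∑ i, (log 2 + (1 + (n - 1) * q i) / 2 - 1) := Finset.sum_le_sum fun i _ ↦ hterm i
    _ = n * log 2 - 1 / 2 := by
      simp only [Finset.sum_sub_distrib, Finset.sum_add_distrib, ← Finset.sum_div,
        ← Finset.mul_sum, hsum, Finset.sum_const, Finset.card_univ, nsmul_eq_mul, n]
      ring
    _ ≤ n * log 2 := by linarith

lemma ENNReal.inv_mul_le_div_of_mul_le_add_mul {a b c d n : ℝ≥0∞} (hc : c ≠ ∞) (hd : d ≠ 0)
    (h : c * a ≤ b + n * d) : n⁻¹ * a ≤ (n⁻¹ * b + d) / c := by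
  rw [ENNReal.le_div_iff_mul_le (Or.inr (by simp [hd])) (Or.inl hc)]
  calc n⁻¹ * a * c = n⁻¹ * (c * a) := by ring
    _ ≤ n⁻¹ * (b + n * d) := by gcongr
    _ = n⁻¹ * b + (n⁻¹ * n) * d := by ring
    _ ≤ n⁻¹ * b + d := by grw [ENNReal.inv_mul_le_one n, one_mul]

theorem fano_inequality_general {E : Type*} [MeasurableSpace E] (N : ℕ)
    (A : Fin N → Set E) (hmeas : ∀ i, MeasurableSet (A i))
    (hdisj : Pairwise (Function.onFun Disjoint A))
    (hcover : (⋃ i, A i) = Set.univ)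
    (P : Fin N → Measure E) (hP : ∀ i, IsProbabilityMeasure (P i))
    (Q : Measure E) (hQ : IsProbabilityMeasure Q) :
    (1 / N : ℝ≥0∞) * ∑ i, P i (A i)
      ≤ ((1 / N : ℝ≥0∞) * ∑ i, klDiv (P i) Q + ENNReal.ofReal (Real.log 2)) /
          ENNReal.ofReal (Real.log N) := by
  have hQA : ∑ i, Q.real (A i) = 1 := by
    rw [← measureReal_iUnion_fintype hdisj hmeas, hcover, probReal_univ]
  have hlog : ∑ i, ENNReal.ofReal (log (1 + (N - 1) * Q.real (A i)))
      ≤ N * ENNReal.ofReal (log 2) := by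
    rw [← ENNReal.ofReal_sum_of_nonneg fun i _ ↦ log_nonneg (le_add_of_nonneg_right
      (mul_nonneg (sub_nonneg.2 (Nat.one_le_cast.2 i.pos)) measureReal_nonneg)),
      ← ENNReal.ofReal_natCast, ← ENNReal.ofReal_mul (Nat.cast_nonneg _)]
    have h := sum_log_one_add_mul_le_card_mul_log_two (fun i ↦ measureReal_nonneg) hQA
    rw [Fintype.card_fin] at h
    exact ENNReal.ofReal_le_ofReal h
  have hsum : ENNReal.ofReal (log N) * ∑ i, P i (A i)
      ≤ ∑ i, klDiv (P i) Q + N * ENNReal.ofReal (log 2) := by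
    calc ENNReal.ofReal (log N) * ∑ i, P i (A i)
        = ∑ i, ENNReal.ofReal (log N) * P i (A i) := Finset.mul_sum _ _ _
      _ ≤ ∑ i, (klDiv (P i) Q + ENNReal.ofReal (log (1 + (N - 1) * Q.real (A i)))) :=
          Finset.sum_le_sum fun i _ ↦ ofReal_log_mul_le_klDiv_add (hmeas i) (Nat.cast_pos.2 i.pos)
      _ ≤ ∑ i, klDiv (P i) Q + N * ENNReal.ofReal (log 2) := by
          rw [Finset.sum_add_distrib]; gcongr
  rw [one_div]
  exact ENNReal.inv_mul_le_div_of_mul_le_add_mul ENNReal.ofReal_ne_top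
    (ENNReal.ofReal_pos.2 (log_pos one_lt_two)).ne' hsum

/-- Fano's inequality (Lemma C.2): for a measurable partition `(A_1,…,A_N)` and
probability measures `(ℙ_1,…,ℙ_N)`, for every probability measure `ℚ`,
`(1/N)·Σ ℙ_i(A_i) ≤ ((1/N)·Σ KL(ℙ_i, ℚ) + log 2)/log N`. -/
theorem fano_inequality {E : Type*} [MeasurableSpace E] (N : ℕ) (hN : 2 ≤ N)
    (A : Fin N → Set E) (hmeas : ∀ i, MeasurableSet (A i))
    (hdisj : Pairwise (Function.onFun Disjoint A))
    (hcover : (⋃ i, A i) = Set.univ)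
    (P : Fin N → Measure E) (hP : ∀ i, IsProbabilityMeasure (P i))
    (Q : Measure E) (hQ : IsProbabilityMeasure Q) :
    (1 / N : ℝ≥0∞) * ∑ i, P i (A i)
      ≤ ((1 / N : ℝ≥0∞) * ∑ i, klDiv (P i) Q + ENNReal.ofReal (Real.log 2)) /
          ENNReal.ofReal (Real.log N) :=
  fano_inequality_general N A hmeas hdisj hcover P hP Q hQ
end
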